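/- Let k ≥ 1 and let P be a real k×k matrix with nonnegative entries such that ‖P‖∞ < 1, where ‖M‖∞ := max_i ∑_j |M_{ij}|. Then there exists a unique real k×k matrix X with nonnegative entries and spectral radius ρ(X) < 1 (where ρ(X) := lim_{m→∞} ‖X^m‖∞^{1/m}) such that (I − X)² = I − P; moreover this X satisfies ‖X‖∞ < 1. -/

import Mathlib

attribute [local instance] Matrix.linftyOpNormedRing Matrix.linftyOpNormedAlgebra

variable {k : ℕ}

/-- The spectral radius of a real `k × k` matrix, with respect to the operator norm
`‖M‖ = max_i ∑_j |M i j|` induced by the supremum norm on `ℝᵏ`: it is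
`ρ(M) = lim_{m → ∞} ‖M ^ m‖ ^ (1/m)`, which (by submultiplicativity of the norm,
via Fekete's lemma) equals `inf_{m ≥ 1} ‖M ^ m‖ ^ (1/m)`. -/
noncomputable def specRad (M : Matrix (Fin k) (Fin k) ℝ) : ℝ :=
  ⨅ m : ℕ, ‖M ^ (m + 1)‖ ^ (1 / (m + 1 : ℝ))

/-!
Existence: for `‖P‖ < 1` the map `X ↦ (P + X²) / 2` sends the nonnegative matrices of norm at most
`‖P‖` into themselves and is a contraction there with constant `‖P‖`, so Banach's fixed point
theorem gives `X` with `2X = P + X²`, i.e. `(I - X)² = I - P`.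

Uniqueness: if `Y` is a second solution, `D = Y - X` solves `Y D + D X = 2 D`. Both `X` and `Y` have
powers decaying like `C tⁿ` with `t < 1`, and expanding `2ⁿ D = (L_Y + R_X)ⁿ D` binomially gives
`‖D‖ ≤ C² tⁿ ‖D‖` for all `n`, so `D = 0`.
-/

open Filter Topology Finset Function Metric Set

section BinomialExpansion

variable {A : Type*} [Semiring A]

theorem mulLeft_add_mulRight_pow_apply (a b d : A) (n : ℕ) :
    ((LinearMap.mulLeft ℕ a + LinearMap.mulRight ℕ b) ^ n) d =
      ∑ m ∈ range (n + 1), n.choose m • (a ^ m * d * b ^ (n - m)) := by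
  rw [(LinearMap.commute_mulLeft_right a b).add_pow, LinearMap.sum_apply]
  refine sum_congr rfl fun m _ => ?_
  simp only [Module.End.mul_apply, Module.End.natCast_apply, LinearMap.pow_mulLeft,
    LinearMap.pow_mulRight, LinearMap.mulLeft_apply, LinearMap.mulRight_apply, smul_mul_assoc,
    mul_smul_comm, mul_assoc]

theorem two_pow_nsmul_eq_sum_of_mul_add_mul_eq {a b d : A} (h : a * d + d * b = 2 • d) (n : ℕ) :
    2 ^ n • d = ∑ m ∈ range (n + 1), n.choose m • (a ^ m * d * b ^ (n - m)) := by
  rw [← mulLeft_add_mulRight_pow_apply]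
  induction n with
  | zero => simp
  | succ n ih =>
    rw [pow_succ' (_ + _), Module.End.mul_apply, ← ih, map_nsmul, LinearMap.add_apply,
      LinearMap.mulLeft_apply, LinearMap.mulRight_apply, h, smul_smul, pow_succ]

end BinomialExpansion

section GeometricDecay

variable {R : Type*} [SeminormedRing R]

theorem norm_pow_mul_add_le (a : R) (n q r : ℕ) : ‖a ^ (n * q + r)‖ ≤ ‖a ^ n‖ ^ q * ‖a ^ r‖ := by
  induction q with
  | zero => simp
  | succ q ih =>
    calc ‖a ^ (n * (q + 1) + r)‖ = ‖a ^ n * a ^ (n * q + r)‖ := by rw [← pow_add]; ring_nf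
      _ ≤ ‖a ^ n‖ * ‖a ^ (n * q + r)‖ := norm_mul_le _ _
      _ ≤ ‖a ^ n‖ * (‖a ^ n‖ ^ q * ‖a ^ r‖) := by gcongr
      _ = ‖a ^ n‖ ^ (q + 1) * ‖a ^ r‖ := by ring

theorem exists_norm_pow_le_geometric {a : R} {N : ℕ} (ha : ‖a ^ (N + 1)‖ < 1) :
    ∃ C t : ℝ, 0 ≤ C ∧ 0 ≤ t ∧ t < 1 ∧ ∀ m, ‖a ^ m‖ ≤ C * t ^ m := by
  set n := N + 1
  set s := (1 + ‖a ^ n‖) / 2 with hs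
  have hs0 : 0 < s := by positivity
  have hs1 : s < 1 := by linarith
  set t := s ^ ((n : ℝ)⁻¹)
  have htn : t ^ n = s := Real.rpow_inv_natCast_pow hs0.le N.succ_ne_zero
  have ht0 : 0 ≤ t := Real.rpow_nonneg hs0.le _
  have ht1 : t < 1 := Real.rpow_lt_one hs0.le hs1 (by positivity)
  set B := ∑ r ∈ range n, ‖a ^ r‖
  have hB0 : 0 ≤ B := sum_nonneg fun _ _ => norm_nonneg _
  refine ⟨B / s, t, by positivity, ht0, ht1, fun m => ?_⟩
  obtain ⟨q, r, hr, rfl⟩ : ∃ q r, r < n ∧ m = n * q + r :=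
    ⟨m / n, m % n, Nat.mod_lt _ N.succ_pos, (Nat.div_add_mod m n).symm⟩
  have hB : ‖a ^ r‖ ≤ B := single_le_sum (fun i _ => norm_nonneg (a ^ i)) (mem_range.2 hr)
  -- the remainder `r < n` costs at most one extra factor `t ^ n = s`
  have hts : s * t ^ (n * q) ≤ t ^ (n * q + r) := by
    rw [← htn, ← pow_add, add_comm n]
    exact pow_le_pow_of_le_one ht0 ht1.le (by omega)
  calc ‖a ^ (n * q + r)‖ ≤ ‖a ^ n‖ ^ q * ‖a ^ r‖ := norm_pow_mul_add_le a n q r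
    _ ≤ s ^ q * B := by gcongr; linarith
    _ = t ^ (n * q) * B := by rw [pow_mul, htn]
    _ ≤ B / s * t ^ (n * q + r) := by
      rw [div_mul_eq_mul_div, le_div_iff₀ hs0]
      nlinarith

end GeometricDecay

section NormedAlgebra

variable {R : Type*} [NormedRing R] [NormedAlgebra ℝ R]

theorem eq_zero_of_mul_add_mul_eq_two_nsmul {a b d : R} (ha : ∃ N, ‖a ^ (N + 1)‖ < 1)
    (hb : ∃ N, ‖b ^ (N + 1)‖ < 1) (h : a * d + d * b = 2 • d) : d = 0 := by
  obtain ⟨Na, hNa⟩ := ha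
  obtain ⟨Nb, hNb⟩ := hb
  obtain ⟨Ca, ta, hCa, hta0, hta1, hCta⟩ := exists_norm_pow_le_geometric hNa
  obtain ⟨Cb, tb, hCb, htb0, htb1, hCtb⟩ := exists_norm_pow_le_geometric hNb
  set t := max ta tb
  have ht0 : 0 ≤ t := hta0.trans (le_max_left _ _)
  have ht1 : t < 1 := max_lt hta1 htb1
  have hA : ∀ m, ‖a ^ m‖ ≤ Ca * t ^ m := fun m =>
    (hCta m).trans (by gcongr; exact le_max_left _ _)
  have hB : ∀ m, ‖b ^ m‖ ≤ Cb * t ^ m := fun m =>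
    (hCtb m).trans (by gcongr; exact le_max_right _ _)
  have hbound : ∀ n : ℕ, ‖d‖ ≤ Ca * Cb * t ^ n * ‖d‖ := by
    intro n
    refine le_of_mul_le_mul_left ?_ (by positivity : (0 : ℝ) < 2 ^ n)
    calc (2 : ℝ) ^ n * ‖d‖ = ‖2 ^ n • d‖ := by rw [RCLike.norm_nsmul ℝ, nsmul_eq_mul]; push_cast; rfl
      _ = ‖∑ m ∈ range (n + 1), n.choose m • (a ^ m * d * b ^ (n - m))‖ := by
        rw [two_pow_nsmul_eq_sum_of_mul_add_mul_eq h]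
      _ ≤ ∑ m ∈ range (n + 1), n.choose m * (‖a ^ m‖ * ‖d‖ * ‖b ^ (n - m)‖) :=
        norm_sum_le_of_le _ fun m _ => by
          rw [RCLike.norm_nsmul ℝ, nsmul_eq_mul]
          gcongr
          exact norm_mul₃_le
      _ ≤ ∑ m ∈ range (n + 1), n.choose m * (Ca * t ^ m * ‖d‖ * (Cb * t ^ (n - m))) := by
        gcongr with m
        · exact hA m
        · exact hB (n - m)
      _ = Ca * Cb * ‖d‖ * (t + t) ^ n := by
        rw [add_pow, mul_sum]
        refine sum_congr rfl fun m _ => ?_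
        ring
      _ = 2 ^ n * (Ca * Cb * t ^ n * ‖d‖) := by ring
  have hlim : Tendsto (fun n : ℕ => Ca * Cb * t ^ n * ‖d‖) atTop (𝓝 0) := by
    simpa using ((tendsto_pow_atTop_nhds_zero_of_lt_one ht0 ht1).const_mul (Ca * Cb)).mul_const ‖d‖
  exact norm_le_zero_iff.mp (ge_of_tendsto' hlim hbound)

theorem eq_of_one_sub_sq_eq {x y : R} (hx : ∃ N, ‖x ^ (N + 1)‖ < 1)
    (hy : ∃ N, ‖y ^ (N + 1)‖ < 1) (h : (1 - y) ^ 2 = (1 - x) ^ 2) : y = x := by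
  have hsylv : y * (y - x) + (y - x) * x = 2 • (y - x) :=
    calc y * (y - x) + (y - x) * x = (1 - y) ^ 2 - (1 - x) ^ 2 + 2 • (y - x) := by noncomm_ring
      _ = 2 • (y - x) := by rw [h, sub_self, zero_add]
  exact sub_eq_zero.mp (eq_zero_of_mul_add_mul_eq_two_nsmul hy hx hsylv)

noncomputable def sqrtStep (p x : R) : R := (2 : ℝ)⁻¹ • (p + x * x)

theorem one_sub_sq_eq_of_isFixedPt {p x : R} (h : IsFixedPt (sqrtStep p) x) :
    (1 - x) ^ 2 = 1 - p := by
  have h2 : p + x * x = 2 • x := by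
    calc p + x * x = (2 : ℝ) • sqrtStep p x := by
          rw [sqrtStep, smul_smul, mul_inv_cancel₀ two_ne_zero, one_smul]
      _ = 2 • x := by rw [h.eq, ofNat_smul_eq_nsmul]
  calc (1 - x) ^ 2 = 1 - 2 • x + x * x := by noncomm_ring
    _ = 1 - p := by rw [← h2]; abel

theorem norm_sqrtStep_le {p x : R} (hp : ‖p‖ ≤ 1) (hx : ‖x‖ ≤ ‖p‖) : ‖sqrtStep p x‖ ≤ ‖p‖ := by
  have hxx : ‖x * x‖ ≤ ‖p‖ := calc
    ‖x * x‖ ≤ ‖x‖ * ‖x‖ := norm_mul_le _ _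
    _ ≤ ‖p‖ * 1 := by gcongr; exact hx.trans hp
    _ = ‖p‖ := mul_one _
  rw [sqrtStep, norm_smul, norm_inv, Real.norm_two]
  linarith [norm_add_le p (x * x)]

theorem dist_sqrtStep_le (p : R) {x y : R} {r : ℝ} (hx : ‖x‖ ≤ r) (hy : ‖y‖ ≤ r) :
    dist (sqrtStep p x) (sqrtStep p y) ≤ r * dist x y := by
  have hdiff : sqrtStep p x - sqrtStep p y = (2 : ℝ)⁻¹ • (x * (x - y) + (x - y) * y) := by
    rw [sqrtStep, sqrtStep, ← smul_sub]
    congr 1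
    noncomm_ring
  have hsum : ‖x * (x - y) + (x - y) * y‖ ≤ 2 * r * ‖x - y‖ := calc
    _ ≤ ‖x‖ * ‖x - y‖ + ‖x - y‖ * ‖y‖ :=
      (norm_add_le _ _).trans (add_le_add (norm_mul_le _ _) (norm_mul_le _ _))
    _ ≤ r * ‖x - y‖ + ‖x - y‖ * r := by gcongr
    _ = 2 * r * ‖x - y‖ := by ring
  rw [dist_eq_norm, dist_eq_norm, hdiff, norm_smul, norm_inv, Real.norm_two]
  linarith

theorem exists_isFixedPt_sqrtStep [CompleteSpace R] {p : R} (hp : ‖p‖ < 1) :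
    ∃ x, ‖x‖ ≤ ‖p‖ ∧ IsFixedPt (sqrtStep p) x ∧
      Tendsto (fun n => (sqrtStep p)^[n] 0) atTop (𝓝 x) := by
  have hmaps : MapsTo (sqrtStep p) (closedBall 0 ‖p‖) (closedBall 0 ‖p‖) := fun x hx => by
    simpa using norm_sqrtStep_le hp.le (by simpa using hx)
  have hcontr : ContractingWith ‖p‖₊ (hmaps.restrict _ _ _) := by
    refine ⟨hp, LipschitzWith.of_dist_le_mul fun x y => ?_⟩
    exact dist_sqrtStep_le p (mem_closedBall_zero_iff.mp x.2) (mem_closedBall_zero_iff.mp y.2)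
  obtain ⟨x, hx, hfix, hlim, -⟩ := hcontr.exists_fixedPoint' isClosed_closedBall.isComplete hmaps
    (mem_closedBall_self (norm_nonneg p)) (edist_ne_top _ _)
  exact ⟨x, by simpa using hx, hfix, hlim⟩

end NormedAlgebra

theorem Matrix.isClosed_setOf_forall_nonneg {m n : Type*} :
    IsClosed {M : Matrix m n ℝ | ∀ i j, 0 ≤ M i j} := by
  simp only [ofPred_forall]
  exact isClosed_iInter fun i => isClosed_iInter fun j =>
    isClosed_le continuous_const (continuous_id.matrix_elem i j)

section Matrix

variable {n : Type*} [Fintype n] [DecidableEq n]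

theorem sqrtStep_nonneg {P M : Matrix n n ℝ} (hP : ∀ i j, 0 ≤ P i j) (hM : ∀ i j, 0 ≤ M i j)
    (i j : n) : 0 ≤ sqrtStep P M i j := by
  have hMM : 0 ≤ (M * M) i j := sum_nonneg fun l _ => mul_nonneg (hM i l) (hM l j)
  simp only [sqrtStep, Matrix.smul_apply, Matrix.add_apply, smul_eq_mul]
  exact mul_nonneg (by norm_num) (add_nonneg (hP i j) hMM)

theorem exists_nonneg_isFixedPt_sqrtStep {P : Matrix n n ℝ} (hP : ∀ i j, 0 ≤ P i j)
    (hPnorm : ‖P‖ < 1) :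
    ∃ X : Matrix n n ℝ, ‖X‖ ≤ ‖P‖ ∧ (∀ i j, 0 ≤ X i j) ∧ IsFixedPt (sqrtStep P) X := by
  obtain ⟨X, hX, hfix, hlim⟩ := exists_isFixedPt_sqrtStep hPnorm
  have hiter : ∀ m, ∀ i j, 0 ≤ (sqrtStep P)^[m] 0 i j := by
    intro m
    induction m with
    | zero => exact fun _ _ => le_rfl
    | succ m ih => rw [iterate_succ_apply']; exact sqrtStep_nonneg hP ih
  exact ⟨X, hX, Matrix.isClosed_setOf_forall_nonneg.mem_of_tendsto hlim (Eventually.of_forall hiter),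
    hfix⟩

end Matrix

theorem specRad_le_norm (M : Matrix (Fin k) (Fin k) ℝ) : specRad M ≤ ‖M‖ := by
  have hbdd : BddBelow (range fun m : ℕ => ‖M ^ (m + 1)‖ ^ (1 / (m + 1 : ℝ))) :=
    ⟨0, forall_mem_range.2 fun m => Real.rpow_nonneg (norm_nonneg _) _⟩
  simpa [specRad] using ciInf_le hbdd 0

theorem exists_norm_pow_lt_one_of_specRad_lt_one {M : Matrix (Fin k) (Fin k) ℝ}
    (h : specRad M < 1) : ∃ N, ‖M ^ (N + 1)‖ < 1 := by
  obtain ⟨N, hN⟩ := exists_lt_of_ciInf_lt h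
  refine ⟨N, lt_of_not_ge fun hge => hN.not_ge ?_⟩
  exact Real.one_le_rpow hge (by positivity)

theorem finite_m_matrix_square_root_general
    (P : Matrix (Fin k) (Fin k) ℝ)
    (hP : ∀ i j : Fin k, 0 ≤ P i j) (hPnorm : ‖P‖ < 1) :
    ∃ X : Matrix (Fin k) (Fin k) ℝ,
      ((∀ i j : Fin k, 0 ≤ X i j) ∧ specRad X < 1 ∧ (1 - X) ^ 2 = 1 - P ∧ ‖X‖ < 1) ∧
      ∀ Y : Matrix (Fin k) (Fin k) ℝ,
        ((∀ i j : Fin k, 0 ≤ Y i j) ∧ specRad Y < 1 ∧ (1 - Y) ^ 2 = 1 - P) → Y = X := by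
  obtain ⟨X, hXP, hX, hfix⟩ := exists_nonneg_isFixedPt_sqrtStep hP hPnorm
  have hXnorm : ‖X‖ < 1 := hXP.trans_lt hPnorm
  have hXsq : (1 - X) ^ 2 = 1 - P := one_sub_sq_eq_of_isFixedPt hfix
  refine ⟨X, ⟨hX, (specRad_le_norm X).trans_lt hXnorm, hXsq, hXnorm⟩, ?_⟩
  rintro Y ⟨-, hY, hYsq⟩
  exact eq_of_one_sub_sq_eq ⟨0, by simpa using hXnorm⟩
    (exists_norm_pow_lt_one_of_specRad_lt_one hY) (hYsq.trans hXsq.symm)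

/-- Finite-dimensional `M`-matrix square root: if `P` is an entrywise nonnegative
real `k × k` matrix with `‖P‖_∞ < 1`, then there is a unique entrywise nonnegative
matrix `X` with spectral radius `ρ(X) < 1` such that `(I − X)² = I − P`; moreover
this `X` satisfies `‖X‖_∞ < 1`. -/
theorem finite_m_matrix_square_root (hk : 1 ≤ k)
    (P : Matrix (Fin k) (Fin k) ℝ)
    (hP : ∀ i j : Fin k, 0 ≤ P i j) (hPnorm : ‖P‖ < 1) :
    ∃ X : Matrix (Fin k) (Fin k) ℝ,
      ((∀ i j : Fin k, 0 ≤ X i j) ∧ specRad X < 1 ∧ (1 - X) ^ 2 = 1 - P ∧ ‖X‖ < 1) ∧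
      ∀ Y : Matrix (Fin k) (Fin k) ℝ,
        ((∀ i j : Fin k, 0 ≤ Y i j) ∧ specRad Y < 1 ∧ (1 - Y) ^ 2 = 1 - P) → Y = X :=
  finite_m_matrix_square_root_general P hP hPnorm
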